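/- arXiv:1501.06098 — 2 statements merged into one kernel-verified Lean document; each statement's English description precedes it below -/
import Mathlib

section
/- For every positive integer k, setting a = (2k+1)², M = k(8k(k+1)+1), and letting c be the positive integer with 2c = k(k+1)(4(2k+1)⁴ − 1), one has S(M,a) = c²; moreover M = (√a − 1)(2a − 1)/2 and 8c = (a−1)(4a²−1). In particular, for every odd integer square a > 1 there is at least one pair (M,c) of positive integers with M > 1 and S(M,a) = c². -/
/-- `S M a` is the sum of `M` consecutive cubes starting at `a`. -/
def S (M : ℕ) (a : ℤ) : ℤ := ∑ i ∈ Finset.range M, (a + i) ^ 3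

lemma S_closed (M : ℕ) (a : ℤ) :
    4 * S M a = ((a + M - 1) * (a + M)) ^ 2 - ((a - 1) * a) ^ 2 := by
  induction M with
  | zero => simp [S]
  | succ n ih =>
      rw [S, Finset.sum_range_succ, ← S]
      push_cast
      push_cast at ih
      linear_combination ih

lemma main (k : ℕ) (hk : 0 < k) (M a : ℕ) (c : ℤ)
    (ha : a = (2 * k + 1) ^ 2)
    (hM : M = k * (8 * k * (k + 1) + 1))
    (hc : 2 * c = (k : ℤ) * (k + 1) * (4 * (2 * (k : ℤ) + 1) ^ 4 - 1)) :
    (0 < c ∧ S M (a : ℤ) = c ^ 2 ∧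
      2 * M = (Nat.sqrt a - 1) * (2 * a - 1) ∧
      8 * c = ((a : ℤ) - 1) * (4 * (a : ℤ) ^ 2 - 1)) := by
  have hk' : (1 : ℤ) ≤ (k : ℤ) := by exact_mod_cast hk
  have hcpos : 0 < c := by nlinarith [hc]
  have hsq : (2 * c) * (2 * c) =
      ((k : ℤ) * (k + 1) * (4 * (2 * (k : ℤ) + 1) ^ 4 - 1)) *
      ((k : ℤ) * (k + 1) * (4 * (2 * (k : ℤ) + 1) ^ 4 - 1)) := by rw [hc]
  refine ⟨hcpos, ?_, ?_, ?_⟩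
  · have h4 : 4 * S M (a : ℤ) = 4 * c ^ 2 := by
      rw [S_closed]
      subst ha hM
      push_cast
      linear_combination -hsq
    linarith
  · have hs : Nat.sqrt a = 2 * k + 1 := by rw [ha, Nat.sqrt_eq']
    have h1 : 2 * k + 1 - 1 = 2 * k := by omega
    have h2 : 2 * a - 1 = 8 * k * (k + 1) + 1 := by
      have h3 : a = 4 * (k * (k + 1)) + 1 := by rw [ha]; ring
      have h4 : 8 * k * (k + 1) = 2 * (4 * (k * (k + 1))) := by ring
      omega
    rw [hs, h1, h2, hM]; ring
  · subst ha
    push_cast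
    linear_combination 4 * hc

/-- For every positive integer `k`, with `a = (2k+1)²`, `M = k(8k(k+1)+1)` and
`c` the positive integer with `2c = k(k+1)(4(2k+1)⁴ − 1)`, one has `S(M,a) = c²`;
moreover `M = (√a − 1)(2a − 1)/2` and `8c = (a−1)(4a²−1)`. In particular, every odd
integer square `a > 1` admits a pair `(M,c)` with `M > 1` and `S(M,a) = c²`. -/
theorem odd_square_a_solutions :
    (∀ k : ℕ, 0 < k → ∀ (M a : ℕ) (c : ℤ),
      a = (2 * k + 1) ^ 2 →
      M = k * (8 * k * (k + 1) + 1) →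
      2 * c = (k : ℤ) * (k + 1) * (4 * (2 * (k : ℤ) + 1) ^ 4 - 1) →
      (0 < c ∧ S M (a : ℤ) = c ^ 2 ∧
        2 * M = (Nat.sqrt a - 1) * (2 * a - 1) ∧
        8 * c = ((a : ℤ) - 1) * (4 * (a : ℤ) ^ 2 - 1))) ∧
    (∀ a : ℕ, 1 < a → Odd a → IsSquare a →
      ∃ (M : ℕ) (c : ℤ), 1 < M ∧ 0 < c ∧ S M (a : ℤ) = c ^ 2) := by
  constructor
  · exact main
  · intro a ha hodd hsq
    obtain ⟨r, hr⟩ := hsq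
    have hrodd : Odd r := by
      rcases Nat.even_or_odd r with he | ho
      · exact absurd hodd (by simp [hr, Nat.even_mul.mpr (Or.inl he)])
      · exact ho
    obtain ⟨k, hk⟩ := hrodd
    have hk0 : 0 < k := by nlinarith [hr, ha, hk]
    obtain ⟨m, hm⟩ := Nat.even_mul_succ_self k
    have hc : 2 * ((m : ℤ) * (4 * (2 * (k : ℤ) + 1) ^ 4 - 1)) =
        (k : ℤ) * (k + 1) * (4 * (2 * (k : ℤ) + 1) ^ 4 - 1) := by
      have h2m : (k : ℤ) * ((k : ℤ) + 1) = 2 * m := by exact_mod_cast (by omega : k * (k + 1) = 2 * m)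
      rw [h2m]; ring
    have h := main k hk0 (k * (8 * k * (k + 1) + 1)) ((2 * k + 1) ^ 2)
      ((m : ℤ) * (4 * (2 * (k : ℤ) + 1) ^ 4 - 1)) rfl rfl hc
    refine ⟨k * (8 * k * (k + 1) + 1), _, ?_, h.1, ?_⟩
    · have : 1 ≤ k := hk0
      calc 1 < 1 * (8 * 1 * (1 + 1) + 1) := by norm_num
        _ ≤ k * (8 * k * (k + 1) + 1) := by
            apply Nat.mul_le_mul this
            have := Nat.mul_le_mul (Nat.mul_le_mul_left 8 this) (Nat.add_le_add_right this 1)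
            omega
    · have ha' : (a : ℤ) = (((2 * k + 1) ^ 2 : ℕ) : ℤ) := by
        push_cast; rw [hr, hk]; push_cast; ring
      rw [ha']
      exact h.2.1
end

section
/- Let D, N, x, y, X, Y be integers with x² − D·y² = 1 and X² − D·Y² = N. Then for every integer n, setting X_n = X·T_n(x) + D·Y·y·U_{n−1}(x) and Y_n = X·y·U_{n−1}(x) + Y·T_n(x), one has X_n² − D·Y_n² = N. -/
/-- `T n x` is the `n`-th Chebyshev polynomial of the first kind evaluated at `x`. -/
noncomputable def T (n : ℤ) (x : ℤ) : ℤ := (Polynomial.Chebyshev.T ℤ n).eval x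

/-- `U n x` is the `n`-th Chebyshev polynomial of the second kind evaluated at `x`. -/
noncomputable def U (n : ℤ) (x : ℤ) : ℤ := (Polynomial.Chebyshev.U ℤ n).eval x

private lemma T_rec (n : ℤ) (x : ℤ) : T (n + 2) x = x * T (n + 1) x - (1 - x ^ 2) * U n x := by
  have := congrArg (Polynomial.eval x) (Polynomial.Chebyshev.T_eq_X_mul_T_sub_pol_U ℤ n)
  simpa [T, U] using this

private lemma U_rec (n : ℤ) (x : ℤ) : U (n + 1) x = x * U n x + T (n + 1) x := by
  have := congrArg (Polynomial.eval x) (Polynomial.Chebyshev.U_eq_X_mul_U_add_T ℤ n)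
  simpa [T, U] using this

private lemma key (x : ℤ) : ∀ n : ℤ, T n x ^ 2 - (x ^ 2 - 1) * U (n - 1) x ^ 2 = 1 := by
  intro n
  induction n using Polynomial.Chebyshev.induct with
  | zero => simp [T, U]
  | one => simp [T, U]
  | add_two n ih1 _ =>
      have h1 := T_rec n x
      have h2 := U_rec n x
      have e0 : ((n : ℤ) + 2) - 1 = (n + 1) := by ring
      rw [e0]
      have e1 : ((n : ℤ) + 1) - 1 = (n : ℤ) := by ring
      rw [e1] at ih1
      linear_combination ih1
        + (T (n + 2) x + (x * T (n + 1) x + (x ^ 2 - 1) * U n x)) * h1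
        - (x ^ 2 - 1) * (U (n + 1) x + (x * U n x + T (n + 1) x)) * h2
  | neg_add_one n ih0 _ =>
      have h1 := T_rec (-(n : ℤ) - 2) x
      have h2 := U_rec (-(n : ℤ) - 2) x
      have e0 : (-(n : ℤ) - 2 + 2) = -(n : ℤ) := by ring
      have e1 : (-(n : ℤ) - 2 + 1) = -(n : ℤ) - 1 := by ring
      rw [e0, e1] at h1
      rw [e1] at h2
      have e2 : (-(n : ℤ)) - 1 = -(n : ℤ) - 1 := by ring
      rw [e2] at ih0
      have e3 : (-(n : ℤ) - 1) - 1 = -(n : ℤ) - 2 := by ring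
      rw [e3]
      linear_combination ih0
        - (T (-(n : ℤ)) x + (x * T (-(n : ℤ) - 1) x + (x ^ 2 - 1) * U (-(n : ℤ) - 2) x)) * h1
        + (x ^ 2 - 1) * (U (-(n : ℤ) - 1) x + (x * U (-(n : ℤ) - 2) x + T (-(n : ℤ) - 1) x)) * h2

/-- If `(x,y)` solves the Pell equation `x² − Dy² = 1` and `(X,Y)` solves
`X² − DY² = N`, then for every integer `n`, the pair
`(X·T_n(x) + D·Y·y·U_{n−1}(x), X·y·U_{n−1}(x) + Y·T_n(x))` also solves `X² − DY² = N`. -/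
theorem pell_solutions_from_fundamental (D N x y X Y : ℤ)
    (hxy : x ^ 2 - D * y ^ 2 = 1) (hXY : X ^ 2 - D * Y ^ 2 = N) (n : ℤ) :
    (X * T n x + D * Y * y * U (n - 1) x) ^ 2
      - D * (X * y * U (n - 1) x + Y * T n x) ^ 2 = N := by
  have hk := key x n
  linear_combination (T n x ^ 2 - D * y ^ 2 * U (n - 1) x ^ 2) * hXY + N * hk
    + N * U (n - 1) x ^ 2 * hxy
end
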